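/- arXiv:2409.13873 — 2 statements merged into one kernel-verified Lean document; each statement's English description precedes it below -/
import Mathlib

section
/- The PTMVN density also factors with the roles of ω and b reversed: for all l < ω < u and b ∈ ℝ^{q−1}, φ_q((ω,b) | μ, Σ) / (Φ(υ) − Φ(λ)) = [ (Φ(υ_b) − Φ(λ_b)) / (Φ(υ) − Φ(λ)) · φ_{q−1}(b | μ_b, Σ_b) ] · f_TN(ω | μ_{ω|b}, σ²_{ω|b}, l, u), where μ_{ω|b} = μ_ω + σ_{bω}ᵀ Σ_b⁻¹ (b − μ_b), σ²_{ω|b} = σ_ω² − σ_{bω}ᵀ Σ_b⁻¹ σ_{bω} (positive by positive definiteness of Σ), υ_b = (u − μ_{ω|b})/σ_{ω|b}, and λ_b = (l − μ_{ω|b})/σ_{ω|b}. In particular the conditional distribution of ω given b is truncated normal TN(μ_{ω|b}, σ²_{ω|b}, l, u). (Proposition 2 of the paper, ω | b part.) -/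
open MeasureTheory Matrix Real

/-- The standard normal probability density function φ. -/
noncomputable def stdPDF (x : ℝ) : ℝ :=
  (Real.sqrt (2 * Real.pi))⁻¹ * Real.exp (-(x ^ 2) / 2)

/-- The standard normal cumulative distribution function Φ. -/
noncomputable def stdCDF (x : ℝ) : ℝ := ∫ t in Set.Iic x, stdPDF t

/-- The `n`-variate normal density `φ_n(x | μ, Σ)`. -/
noncomputable def mvnPDF {n : ℕ} (μ : Fin n → ℝ) (S : Matrix (Fin n) (Fin n) ℝ)
    (x : Fin n → ℝ) : ℝ :=
  (Real.sqrt ((2 * Real.pi) ^ n * S.det))⁻¹ *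
    Real.exp (-((x - μ) ⬝ᵥ (S⁻¹ *ᵥ (x - μ))) / 2)

/-- The truncated normal density `f_TN(x | m, s², l, u)`. -/
noncomputable def tnPDF (m s l u x : ℝ) : ℝ :=
  (if l < x ∧ x < u then s⁻¹ * stdPDF ((x - m) / s) else 0) /
    (stdCDF ((u - m) / s) - stdCDF ((l - m) / s))

lemma stdPDF_pos (x : ℝ) : 0 < stdPDF x := by
  unfold stdPDF
  have h : 0 < Real.sqrt (2 * Real.pi) := Real.sqrt_pos.2 (by positivity)
  positivity

lemma integrable_stdPDF : Integrable stdPDF := by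
  have h : Integrable (fun x : ℝ => Real.exp (-(1/2 : ℝ) * x ^ 2)) :=
    integrable_exp_neg_mul_sq (by norm_num)
  have h2 : Integrable (fun x : ℝ => Real.exp (-(x ^ 2) / 2)) := by
    convert h using 2 with x
    ring_nf
  unfold stdPDF
  exact h2.const_mul _

lemma stdCDF_sub_pos {a b : ℝ} (h : a < b) : 0 < stdCDF b - stdCDF a := by
  unfold stdCDF
  rw [intervalIntegral.integral_Iic_sub_Iic integrable_stdPDF.integrableOn
    integrable_stdPDF.integrableOn]
  exact intervalIntegral.intervalIntegral_pos_of_pos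
    integrable_stdPDF.intervalIntegrable stdPDF_pos h

/-- The index equivalence splitting `Fin (p+1)` into the head index and the tail. -/
def finSuccEquivUnitSum (p : ℕ) : Fin (p + 1) ≃ Unit ⊕ Fin p where
  toFun := Fin.cases (Sum.inl ()) (fun i => Sum.inr i)
  invFun := Sum.elim (fun _ => 0) Fin.succ
  left_inv x := by induction x using Fin.cases <;> simp
  right_inv x := by rcases x with _ | i <;> simp

/-- Schur-complement determinant identity for the pinned block structure. -/
lemma aux_det {p : ℕ} (σω : ℝ) (σbω : Fin p → ℝ)
    (Sb : Matrix (Fin p) (Fin p) ℝ) (hSb : Sb.PosDef)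
    (S : Matrix (Fin (p + 1)) (Fin (p + 1)) ℝ)
    (h00 : S 0 0 = σω ^ 2)
    (h0i : ∀ i : Fin p, S 0 i.succ = σbω i)
    (hi0 : ∀ i : Fin p, S i.succ 0 = σbω i)
    (hij : ∀ i j : Fin p, S i.succ j.succ = Sb i j) :
    S.det = Sb.det * (σω ^ 2 - σbω ⬝ᵥ (Sb⁻¹ *ᵥ σbω)) := by
  set k : ℝ := σω ^ 2 - σbω ⬝ᵥ (Sb⁻¹ *ᵥ σbω) with hk_def
  have hSbdet : 0 < Sb.det := hSb.det_pos
  haveI : Invertible Sb := Sb.invertibleOfIsUnitDet (isUnit_iff_ne_zero.2 hSbdet.ne')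
  set e := finSuccEquivUnitSum p with he
  set A₁ : Matrix Unit Unit ℝ := Matrix.of fun _ _ => σω ^ 2 with hA₁
  set B₁ : Matrix Unit (Fin p) ℝ := Matrix.of fun _ j => σbω j with hB₁
  set C₁ : Matrix (Fin p) Unit ℝ := Matrix.of fun i _ => σbω i with hC₁
  have hS : S = (Matrix.fromBlocks A₁ B₁ C₁ Sb).submatrix e e := by
    ext i j
    induction i using Fin.cases with
    | zero =>
      induction j using Fin.cases with
      | zero => simp [he, finSuccEquivUnitSum, h00, hA₁]
      | succ j => simp [he, finSuccEquivUnitSum, h0i j, hB₁]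
    | succ i =>
      induction j using Fin.cases with
      | zero => simp [he, finSuccEquivUnitSum, hi0 i, hC₁]
      | succ j => simp [he, finSuccEquivUnitSum, hij i j]
  have hschur : (B₁ * Sb⁻¹ * C₁) () () = σbω ⬝ᵥ (Sb⁻¹ *ᵥ σbω) := by
    simp only [Matrix.mul_apply, Matrix.of_apply, hB₁, hC₁, Matrix.mulVec, dotProduct,
      Finset.sum_mul, Finset.mul_sum]
    rw [Finset.sum_comm]
    exact Finset.sum_congr rfl fun i _ => Finset.sum_congr rfl fun j _ => by ring
  rw [hS, Matrix.det_submatrix_equiv_self, Matrix.det_fromBlocks₂₂,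
    Matrix.invOf_eq_nonsing_inv]
  congr 1
  rw [Matrix.det_unique]
  show A₁ () () - (B₁ * Sb⁻¹ * C₁) () () = k
  rw [hschur, hA₁]
  rfl

/-- Quadratic-form decomposition along the Schur complement. -/
lemma aux_quad {p : ℕ} (σω : ℝ) (σbω : Fin p → ℝ)
    (Sb : Matrix (Fin p) (Fin p) ℝ) (hSb : Sb.PosDef)
    (S : Matrix (Fin (p + 1)) (Fin (p + 1)) ℝ) (hSpd : S.PosDef)
    (h00 : S 0 0 = σω ^ 2)
    (h0i : ∀ i : Fin p, S 0 i.succ = σbω i)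
    (hi0 : ∀ i : Fin p, S i.succ 0 = σbω i)
    (hij : ∀ i j : Fin p, S i.succ j.succ = Sb i j)
    (hk : 0 < σω ^ 2 - σbω ⬝ᵥ (Sb⁻¹ *ᵥ σbω))
    (v0 : ℝ) (y : Fin p → ℝ) :
    (Fin.cons v0 y) ⬝ᵥ (S⁻¹ *ᵥ Fin.cons v0 y) =
      y ⬝ᵥ (Sb⁻¹ *ᵥ y) + (v0 - σbω ⬝ᵥ (Sb⁻¹ *ᵥ y)) ^ 2 /
        (σω ^ 2 - σbω ⬝ᵥ (Sb⁻¹ *ᵥ σbω)) := by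
  set k : ℝ := σω ^ 2 - σbω ⬝ᵥ (Sb⁻¹ *ᵥ σbω) with hk_def
  set α : ℝ := σbω ⬝ᵥ (Sb⁻¹ *ᵥ y) with hα_def
  have hSbdet : 0 < Sb.det := hSb.det_pos
  have hSbunit : IsUnit Sb.det := isUnit_iff_ne_zero.2 hSbdet.ne'
  have hSbsymm : Sbᵀ = Sb := by
    have := hSb.1.eq
    rwa [Matrix.conjTranspose_eq_transpose_of_trivial] at this
  have hinv_symm : (Sb⁻¹)ᵀ = Sb⁻¹ := by
    rw [Matrix.transpose_nonsing_inv, hSbsymm]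
  have hdotsymm : ∀ x w : Fin p → ℝ, x ⬝ᵥ (Sb⁻¹ *ᵥ w) = w ⬝ᵥ (Sb⁻¹ *ᵥ x) := by
    intro x w
    rw [Matrix.dotProduct_mulVec, ← hinv_symm, Matrix.vecMul_transpose,
      dotProduct_comm, hinv_symm]
  set z0 : ℝ := (v0 - α) / k with hz0_def
  set zb : Fin p → ℝ := Sb⁻¹ *ᵥ y - z0 • (Sb⁻¹ *ᵥ σbω) with hzb_def
  have hβ : σbω ⬝ᵥ (Sb⁻¹ *ᵥ σbω) = σω ^ 2 - k := by rw [hk_def]; ring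
  have hSz : S *ᵥ Fin.cons z0 zb = Fin.cons v0 y := by
    ext x
    induction x using Fin.cases with
    | zero =>
      have h1 : (S *ᵥ Fin.cons z0 zb) 0 = σω ^ 2 * z0 + σbω ⬝ᵥ zb := by
        simp [Matrix.mulVec, dotProduct, Fin.sum_univ_succ, h00, h0i]
      have h2 : σbω ⬝ᵥ zb = α - z0 * (σω ^ 2 - k) := by
        rw [hzb_def, dotProduct_sub, dotProduct_smul, smul_eq_mul, hβ, hα_def]
      rw [h1, h2, Fin.cons_zero, hz0_def]
      field_simp
      ring
    | succ i =>
      have h1 : (S *ᵥ Fin.cons z0 zb) i.succ = σbω i * z0 + (Sb *ᵥ zb) i := by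
        simp [Matrix.mulVec, dotProduct, Fin.sum_univ_succ, hi0, hij]
      have h2 : Sb *ᵥ zb = y - z0 • σbω := by
        rw [hzb_def, Matrix.mulVec_sub, Matrix.mulVec_smul, Matrix.mulVec_mulVec,
          Matrix.mulVec_mulVec, Matrix.mul_nonsing_inv Sb hSbunit, Matrix.one_mulVec,
          Matrix.one_mulVec]
      rw [h1, h2, Fin.cons_succ]
      simp [smul_eq_mul]
      ring
  have hz : S⁻¹ *ᵥ Fin.cons v0 y = Fin.cons z0 zb := by
    rw [← hSz, Matrix.mulVec_mulVec,
      Matrix.nonsing_inv_mul S (isUnit_iff_ne_zero.2 hSpd.det_pos.ne'), Matrix.one_mulVec]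
  rw [hz]
  have h3 : Fin.cons v0 y ⬝ᵥ Fin.cons z0 zb = v0 * z0 + y ⬝ᵥ zb := by
    simp [dotProduct, Fin.sum_univ_succ]
  have h4 : y ⬝ᵥ zb = y ⬝ᵥ (Sb⁻¹ *ᵥ y) - z0 * α := by
    rw [hzb_def, dotProduct_sub, dotProduct_smul, smul_eq_mul, hdotsymm y σbω, hα_def]
  rw [h3, h4, hz0_def]
  field_simp
  ring

/-- Proposition 2 (ω | b part): the PTMVN density factors as the marginal density of `b`
times a truncated normal conditional density for `ω` given `b`; moreover the conditional
variance `σ²_{ω|b}` is positive. -/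
theorem ptmvn_factorization_reversed {p : ℕ} (hp : 1 ≤ p)
    (μω : ℝ) (μb : Fin p → ℝ) (σω : ℝ) (hσω : 0 < σω)
    (σbω : Fin p → ℝ) (Sb : Matrix (Fin p) (Fin p) ℝ) (hSb : Sb.PosDef)
    (S : Matrix (Fin (p + 1)) (Fin (p + 1)) ℝ)
    (hSsymm : S.IsSymm) (hSpd : S.PosDef)
    (h00 : S 0 0 = σω ^ 2)
    (h0i : ∀ i : Fin p, S 0 i.succ = σbω i)
    (hi0 : ∀ i : Fin p, S i.succ 0 = σbω i)
    (hij : ∀ i j : Fin p, S i.succ j.succ = Sb i j)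
    (l u : ℝ) (hlu : l < u) :
    0 < σω ^ 2 - σbω ⬝ᵥ (Sb⁻¹ *ᵥ σbω) ∧
    ∀ (ω : ℝ), l < ω → ω < u → ∀ (b : Fin p → ℝ),
      mvnPDF (Fin.cons μω μb) S (Fin.cons ω b) /
          (stdCDF ((u - μω) / σω) - stdCDF ((l - μω) / σω))
        = ((stdCDF ((u - (μω + σbω ⬝ᵥ (Sb⁻¹ *ᵥ (b - μb)))) /
                Real.sqrt (σω ^ 2 - σbω ⬝ᵥ (Sb⁻¹ *ᵥ σbω)) ) -
            stdCDF ((l - (μω + σbω ⬝ᵥ (Sb⁻¹ *ᵥ (b - μb)))) /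
                Real.sqrt (σω ^ 2 - σbω ⬝ᵥ (Sb⁻¹ *ᵥ σbω)) )) /
            (stdCDF ((u - μω) / σω) - stdCDF ((l - μω) / σω)) *
            mvnPDF μb Sb b) *
          tnPDF (μω + σbω ⬝ᵥ (Sb⁻¹ *ᵥ (b - μb)))
            (Real.sqrt (σω ^ 2 - σbω ⬝ᵥ (Sb⁻¹ *ᵥ σbω))) l u ω := by
  have hdet : S.det = Sb.det * (σω ^ 2 - σbω ⬝ᵥ (Sb⁻¹ *ᵥ σbω)) :=
    aux_det σω σbω Sb hSb S h00 h0i hi0 hij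
  have hk : 0 < σω ^ 2 - σbω ⬝ᵥ (Sb⁻¹ *ᵥ σbω) := by
    have h1 := hSpd.det_pos
    rw [hdet] at h1
    rcases mul_pos_iff.mp h1 with ⟨_, h⟩ | ⟨h, _⟩
    · exact h
    · linarith [hSb.det_pos]
  refine ⟨hk, ?_⟩
  intro ω hlω hωu b
  set k : ℝ := σω ^ 2 - σbω ⬝ᵥ (Sb⁻¹ *ᵥ σbω) with hk_def
  set s : ℝ := Real.sqrt k with hs_def
  set α : ℝ := σbω ⬝ᵥ (Sb⁻¹ *ᵥ (b - μb)) with hα_def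
  have hs : 0 < s := Real.sqrt_pos.2 hk
  have hs2 : s ^ 2 = k := Real.sq_sqrt hk.le
  have hkey : mvnPDF (Fin.cons μω μb) S (Fin.cons ω b)
      = mvnPDF μb Sb b * (s⁻¹ * stdPDF ((ω - (μω + α)) / s)) := by
    have hv : (Fin.cons ω b : Fin (p + 1) → ℝ) - Fin.cons μω μb
        = (Fin.cons (ω - μω) (b - μb) : Fin (p + 1) → ℝ) := by
      ext x
      induction x using Fin.cases <;> simp [Fin.cons_zero, Fin.cons_succ]
    have hQ := aux_quad σω σbω Sb hSb S hSpd h00 h0i hi0 hij hk (ω - μω) (b - μb)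
    unfold mvnPDF stdPDF
    rw [hv, hQ]
    have e0 : ω - (μω + α) = (ω - μω) - α := by ring
    have e1 : ((ω - (μω + α)) / s) ^ 2 = ((ω - μω) - α) ^ 2 / k := by
      rw [div_pow, hs2, e0]
    have e2 : Real.exp (-((b - μb) ⬝ᵥ (Sb⁻¹ *ᵥ (b - μb)) + ((ω - μω) - α) ^ 2 / k) / 2)
        = Real.exp (-((b - μb) ⬝ᵥ (Sb⁻¹ *ᵥ (b - μb))) / 2) *
          Real.exp (-(((ω - μω) - α) ^ 2 / k) / 2) := by
      rw [← Real.exp_add]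
      congr 1
      ring
    have hpre : Real.sqrt ((2 * Real.pi) ^ (p + 1) * S.det)
        = Real.sqrt ((2 * Real.pi) ^ p * Sb.det) * (Real.sqrt (2 * Real.pi) * s) := by
      rw [hdet, show (2 * Real.pi) ^ (p + 1) * (Sb.det * k)
          = ((2 * Real.pi) ^ p * Sb.det) * ((2 * Real.pi) * k) by ring,
        Real.sqrt_mul (mul_nonneg (by positivity) hSb.det_pos.le), Real.sqrt_mul (by positivity : (0:ℝ) ≤ 2 * Real.pi)]
    rw [e1, e2, hpre]
    ring
  have hD : 0 < stdCDF ((u - μω) / σω) - stdCDF ((l - μω) / σω) := by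
    apply stdCDF_sub_pos
    apply div_lt_div_of_pos_right (by linarith) hσω
  have hNb : 0 < stdCDF ((u - (μω + α)) / s) - stdCDF ((l - (μω + α)) / s) := by
    apply stdCDF_sub_pos
    apply div_lt_div_of_pos_right (by linarith) hs
  rw [hkey]
  unfold tnPDF
  rw [if_pos ⟨hlω, hωu⟩]
  field_simp
end

section
/- The marginal density of the unconstrained components b of a PTMVN random vector is given by: for every b ∈ ℝ^{q−1}, ∫_l^u φ_q((ω,b) | μ, Σ) / (Φ(υ) − Φ(λ)) dω = [ (Φ(υ_b) − Φ(λ_b)) / (Φ(υ) − Φ(λ)) ] · φ_{q−1}(b | μ_b, Σ_b), where μ_{ω|b} = μ_ω + σ_{bω}ᵀ Σ_b⁻¹ (b − μ_b), σ²_{ω|b} = σ_ω² − σ_{bω}ᵀ Σ_b⁻¹ σ_{bω} > 0, υ_b = (u − μ_{ω|b})/σ_{ω|b}, and λ_b = (l − μ_{ω|b})/σ_{ω|b}. (Proposition 3 of the paper, marginal of b.) -/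
open MeasureTheory Matrix Real

/-! Write `Σ` as the bordered matrix with corner `σ_ω²`, border `σ_{bω}` and block `Σ_b`.
Eliminating the border gives `det Σ = σ²_{ω|b} · det Σ_b`, so `σ²_{ω|b} = det Σ / det Σ_b > 0`,
and `xᵀ Σ⁻¹ x = (x₀ - σ_{bω}ᵀ Σ_b⁻¹ x_b)² / σ²_{ω|b} + x_bᵀ Σ_b⁻¹ x_b`. Hence `φ_q((ω, b) | μ, Σ)`
is the `N(μ_{ω|b}, σ²_{ω|b})` density in `ω` times `φ_{q-1}(b | μ_b, Σ_b)`, and integrating the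
first factor over `[l, u]` gives `Φ(υ_b) - Φ(λ_b)`. -/

namespace Matrix

lemma IsSymm.dotProduct_inv_mulVec_comm {n R : Type*} [Fintype n] [DecidableEq n] [CommRing R]
    {M : Matrix n n R} (hM : M.IsSymm) (v w : n → R) :
    v ⬝ᵥ (M⁻¹ *ᵥ w) = w ⬝ᵥ (M⁻¹ *ᵥ v) := by
  rw [dotProduct_mulVec, ← mulVec_transpose, transpose_nonsing_inv, hM.eq, dotProduct_comm]

section Bordered

variable {R : Type*} {p : ℕ} (a : R) (r c : Fin p → R) (M : Matrix (Fin p) (Fin p) R)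

def bordered : Matrix (Fin (p + 1)) (Fin (p + 1)) R :=
  of (Fin.cons (Fin.cons a r) fun i => Fin.cons (c i) (M i))

@[simp] lemma bordered_zero_zero : bordered a r c M 0 0 = a := rfl

@[simp] lemma bordered_zero_succ (j : Fin p) : bordered a r c M 0 j.succ = r j := rfl

@[simp] lemma bordered_succ_zero (i : Fin p) : bordered a r c M i.succ 0 = c i := by
  simp [bordered]

@[simp] lemma bordered_succ_succ (i j : Fin p) : bordered a r c M i.succ j.succ = M i j := by
  simp [bordered]

@[simp] lemma bordered_submatrix_succ_succ :
    (bordered a r c M).submatrix Fin.succ Fin.succ = M := by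
  ext i j
  simp

lemma transpose_bordered : (bordered a r c M)ᵀ = bordered a c r Mᵀ := by
  ext i j
  cases i using Fin.cases <;> cases j using Fin.cases <;> simp

variable [CommRing R]

lemma bordered_mulVec_cons (x : R) (v : Fin p → R) :
    bordered a r c M *ᵥ Fin.cons x v = Fin.cons (a * x + r ⬝ᵥ v) (x • c + M *ᵥ v) := by
  ext i
  cases i using Fin.cases <;> simp [mulVec, dotProduct, Fin.sum_univ_succ, mul_comm]

lemma det_bordered_zero_col : (bordered a r 0 M).det = a * M.det := by
  rw [det_succ_column_zero, Fin.sum_univ_succ]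
  simp

lemma det_bordered (hM : IsUnit M.det) :
    (bordered a r c M).det = (a - r ⬝ᵥ (M⁻¹ *ᵥ c)) * M.det := by
  have hMc : M *ᵥ (M⁻¹ *ᵥ c) = c := by rw [mulVec_mulVec, mul_nonsing_inv _ hM, one_mulVec]
  have hcol : bordered a r c M * bordered 1 0 (-(M⁻¹ *ᵥ c)) 1 =
      bordered (a - r ⬝ᵥ (M⁻¹ *ᵥ c)) r 0 M := by
    ext i j
    cases i using Fin.cases <;> cases j using Fin.cases <;>
      simp [mul_apply, Fin.sum_univ_succ, one_apply, dotProduct, sub_eq_add_neg]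
    rename_i i
    rw [← congrFun hMc i]
    exact add_neg_cancel _
  have hunit : (bordered 1 0 (-(M⁻¹ *ᵥ c)) (1 : Matrix (Fin p) (Fin p) R)).det = 1 := by
    rw [← det_transpose, transpose_bordered, det_bordered_zero_col, transpose_one, det_one,
      one_mul]
  simpa only [det_mul, hunit, mul_one, det_bordered_zero_col] using congrArg det hcol

end Bordered

lemma cons_dotProduct_inv_bordered_mulVec_cons {K : Type*} [Field K] {p : ℕ} (a : K)
    (r : Fin p → K) {M : Matrix (Fin p) (Fin p) K} (hM : M.IsSymm) (hMdet : IsUnit M.det)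
    (hs : a - r ⬝ᵥ (M⁻¹ *ᵥ r) ≠ 0) (x : K) (v : Fin p → K) :
    Fin.cons x v ⬝ᵥ ((bordered a r r M)⁻¹ *ᵥ Fin.cons x v) =
      (x - r ⬝ᵥ (M⁻¹ *ᵥ v)) ^ 2 / (a - r ⬝ᵥ (M⁻¹ *ᵥ r)) + v ⬝ᵥ (M⁻¹ *ᵥ v) := by
  set y := (bordered a r r M)⁻¹ *ᵥ Fin.cons x v
  have hSdet : IsUnit (bordered a r r M).det := by
    rw [det_bordered _ _ _ _ hMdet]
    exact hs.isUnit.mul hMdet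
  -- solve `bordered a r r M *ᵥ y = Fin.cons x v` blockwise for `y`
  have hy : bordered a r r M *ᵥ Fin.cons (y 0) (Fin.tail y) = Fin.cons x v := by
    rw [Fin.cons_self_tail, mulVec_mulVec, mul_nonsing_inv _ hSdet, one_mulVec]
  obtain ⟨hx, hv⟩ := Fin.cons_inj.mp ((bordered_mulVec_cons ..).symm.trans hy)
  have htail : Fin.tail y = M⁻¹ *ᵥ v - y 0 • (M⁻¹ *ᵥ r) := by
    rw [← hv, mulVec_add, mulVec_mulVec, nonsing_inv_mul _ hMdet, one_mulVec, mulVec_smul]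
    abel
  have hy0 : x - r ⬝ᵥ (M⁻¹ *ᵥ v) = (a - r ⬝ᵥ (M⁻¹ *ᵥ r)) * y 0 := by
    rw [← hx, htail, dotProduct_sub, dotProduct_smul, smul_eq_mul]
    ring
  calc Fin.cons x v ⬝ᵥ y = x * y 0 + v ⬝ᵥ Fin.tail y := cons_dotProduct x v y
    _ = (x - r ⬝ᵥ (M⁻¹ *ᵥ v)) * y 0 + v ⬝ᵥ (M⁻¹ *ᵥ v) := by
        rw [htail, dotProduct_sub, dotProduct_smul, smul_eq_mul, hM.dotProduct_inv_mulVec_comm v r]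
        ring
    _ = _ := by
        rw [hy0]
        field_simp

lemma PosDef.bordered_schur_complement_pos {p : ℕ} {a : ℝ} {r : Fin p → ℝ}
    {M : Matrix (Fin p) (Fin p) ℝ} (hS : (bordered a r r M).PosDef) (hM : M.PosDef) :
    0 < a - r ⬝ᵥ (M⁻¹ *ᵥ r) := by
  have hdet := hS.det_pos
  rw [det_bordered _ _ _ _ hM.det_pos.ne'.isUnit] at hdet
  exact pos_of_mul_pos_left hdet hM.det_pos.le

end Matrix

lemma integral_inv_mul_stdPDF_sub_div (m : ℝ) {s : ℝ} (hs : 0 < s) (l u : ℝ) :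
    ∫ ω in l..u, s⁻¹ * stdPDF ((ω - m) / s) = stdCDF ((u - m) / s) - stdCDF ((l - m) / s) := by
  rw [intervalIntegral.integral_const_mul, intervalIntegral.integral_comp_sub_right
      (fun x => stdPDF (x / s)), intervalIntegral.integral_comp_div _ hs.ne', smul_eq_mul,
    inv_mul_cancel_left₀ hs.ne', ← intervalIntegral.integral_Iic_sub_Iic
      integrable_stdPDF.integrableOn integrable_stdPDF.integrableOn]
  rfl

lemma mvnPDF_bordered_cons {p : ℕ} {a : ℝ} {r : Fin p → ℝ} {M : Matrix (Fin p) (Fin p) ℝ}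
    (hS : (bordered a r r M).PosDef) (hM : M.PosDef) (μ₀ ω : ℝ) (μ x : Fin p → ℝ) :
    mvnPDF (Fin.cons μ₀ μ) (bordered a r r M) (Fin.cons ω x) =
      (√(a - r ⬝ᵥ (M⁻¹ *ᵥ r)))⁻¹ *
          stdPDF ((ω - (μ₀ + r ⬝ᵥ (M⁻¹ *ᵥ (x - μ)))) / √(a - r ⬝ᵥ (M⁻¹ *ᵥ r))) *
        mvnPDF μ M x := by
  set s := a - r ⬝ᵥ (M⁻¹ *ᵥ r)
  have hs : 0 < s := hS.bordered_schur_complement_pos hM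
  have hMdet : IsUnit M.det := hM.det_pos.ne'.isUnit
  have hsqrt : √((2 * π) ^ (p + 1) * (s * M.det)) = √s * (√(2 * π) * √((2 * π) ^ p * M.det)) := by
    rw [← sqrt_mul (by positivity), ← sqrt_mul hs.le]
    ring_nf
  have hexp : rexp (-((ω - μ₀ - r ⬝ᵥ (M⁻¹ *ᵥ (x - μ))) ^ 2 / s + (x - μ) ⬝ᵥ (M⁻¹ *ᵥ (x - μ))) / 2) =
      rexp (-(((ω - (μ₀ + r ⬝ᵥ (M⁻¹ *ᵥ (x - μ)))) / √s) ^ 2) / 2) *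
        rexp (-((x - μ) ⬝ᵥ (M⁻¹ *ᵥ (x - μ))) / 2) := by
    rw [← exp_add, div_pow, sq_sqrt hs.le]
    ring_nf
  unfold mvnPDF stdPDF
  rw [show (Fin.cons ω x - Fin.cons μ₀ μ : Fin (p + 1) → ℝ) = Fin.cons (ω - μ₀) (x - μ) from
      cons_sub_cons ω x μ₀ μ, cons_dotProduct_inv_bordered_mulVec_cons _ _
      (isHermitian_iff_isSymm.mp hM.isHermitian) hMdet hs.ne',
    det_bordered _ _ _ _ hMdet, hsqrt, hexp, mul_inv, mul_inv]
  ring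

theorem ptmvn_marginal_b_general {p : ℕ}
    (μω : ℝ) (μb : Fin p → ℝ) (σω : ℝ)
    (σbω : Fin p → ℝ) (Sb : Matrix (Fin p) (Fin p) ℝ) (hSb : Sb.PosDef)
    (S : Matrix (Fin (p + 1)) (Fin (p + 1)) ℝ)
    (hSpd : S.PosDef)
    (h00 : S 0 0 = σω ^ 2)
    (h0i : ∀ i : Fin p, S 0 i.succ = σbω i)
    (hi0 : ∀ i : Fin p, S i.succ 0 = σbω i)
    (hij : ∀ i j : Fin p, S i.succ j.succ = Sb i j)
    (l u : ℝ) :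
    0 < σω ^ 2 - σbω ⬝ᵥ (Sb⁻¹ *ᵥ σbω) ∧
    ∀ (b : Fin p → ℝ),
      (∫ ω in l..u,
          mvnPDF (Fin.cons μω μb) S (Fin.cons ω b) /
            (stdCDF ((u - μω) / σω) - stdCDF ((l - μω) / σω)))
        = ((stdCDF ((u - (μω + σbω ⬝ᵥ (Sb⁻¹ *ᵥ (b - μb)))) /
                Real.sqrt (σω ^ 2 - σbω ⬝ᵥ (Sb⁻¹ *ᵥ σbω))) -
            stdCDF ((l - (μω + σbω ⬝ᵥ (Sb⁻¹ *ᵥ (b - μb)))) /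
                Real.sqrt (σω ^ 2 - σbω ⬝ᵥ (Sb⁻¹ *ᵥ σbω)))) /
            (stdCDF ((u - μω) / σω) - stdCDF ((l - μω) / σω))) *
          mvnPDF μb Sb b := by
  obtain rfl : S = bordered (σω ^ 2) σbω σbω Sb := by
    ext i j
    cases i using Fin.cases <;> cases j using Fin.cases <;> simp [h00, h0i, hi0, hij]
  have hschur := hSpd.bordered_schur_complement_pos hSb
  refine ⟨hschur, fun b => ?_⟩
  simp_rw [mvnPDF_bordered_cons hSpd hSb]
  rw [intervalIntegral.integral_div, intervalIntegral.integral_mul_const,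
    integral_inv_mul_stdPDF_sub_div _ (sqrt_pos.mpr hschur)]
  ring

/-- Proposition 3 (marginal of b): the marginal density of the unconstrained components
of a PTMVN random vector; the conditional variance `σ²_{ω|b}` is positive. -/
theorem ptmvn_marginal_b {p : ℕ} (hp : 1 ≤ p)
    (μω : ℝ) (μb : Fin p → ℝ) (σω : ℝ) (hσω : 0 < σω)
    (σbω : Fin p → ℝ) (Sb : Matrix (Fin p) (Fin p) ℝ) (hSb : Sb.PosDef)
    (S : Matrix (Fin (p + 1)) (Fin (p + 1)) ℝ)
    (hSsymm : S.IsSymm) (hSpd : S.PosDef)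
    (h00 : S 0 0 = σω ^ 2)
    (h0i : ∀ i : Fin p, S 0 i.succ = σbω i)
    (hi0 : ∀ i : Fin p, S i.succ 0 = σbω i)
    (hij : ∀ i j : Fin p, S i.succ j.succ = Sb i j)
    (l u : ℝ) (hlu : l < u) :
    0 < σω ^ 2 - σbω ⬝ᵥ (Sb⁻¹ *ᵥ σbω) ∧
    ∀ (b : Fin p → ℝ),
      (∫ ω in l..u,
          mvnPDF (Fin.cons μω μb) S (Fin.cons ω b) /
            (stdCDF ((u - μω) / σω) - stdCDF ((l - μω) / σω)))
        = ((stdCDF ((u - (μω + σbω ⬝ᵥ (Sb⁻¹ *ᵥ (b - μb)))) /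
                Real.sqrt (σω ^ 2 - σbω ⬝ᵥ (Sb⁻¹ *ᵥ σbω))) -
            stdCDF ((l - (μω + σbω ⬝ᵥ (Sb⁻¹ *ᵥ (b - μb)))) /
                Real.sqrt (σω ^ 2 - σbω ⬝ᵥ (Sb⁻¹ *ᵥ σbω)))) /
            (stdCDF ((u - μω) / σω) - stdCDF ((l - μω) / σω))) *
          mvnPDF μb Sb b :=
  ptmvn_marginal_b_general μω μb σω σbω Sb hSb S hSpd h00 h0i hi0 hij l u
end
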